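/- Let F_q be a finite field, r > 0, a ∈ F_q, and let x_1,...,x_r, y_1,...,y_r ∈ F_q. Then 𝟙[Σ_{k=1}^r x_k y_k = a] = Σ_{S ⊆ [r]} Σ_{χ_S} f̂^{(a)}_S(χ_S) · (Π_{k∈S} χ_k(x_k)) · (Π_{k∈S} χ_k(y_k)), where f^{(a)}(a_1,...,a_r) := 𝟙[Σ_k a_k = a], f_S is its Möbius transform f_S(a_S) := Σ_{T⊆S} (-1)^{|S\T|} f(a_{(T)}), f̂_S is the normalized Fourier transform over multiplicative characters, and the inner sum ranges over all |S|-tuples of multiplicative characters of F_q. -/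

import Mathlib

/-- The Möbius transform `f_S` of `f : F_q^r → ℂ`, viewed as a function of a full
`r`-tuple: `f_S(a) = ∑_{T ⊆ S} (-1)^{|S \ T|} f(a_{(T)})`. -/
noncomputable def mobiusTransform {F : Type*} [Field F] {r : ℕ}
    (f : (Fin r → F) → ℂ) (S : Finset (Fin r)) (a : Fin r → F) : ℂ :=
  ∑ T ∈ S.powerset, (-1 : ℂ) ^ (S \ T).card * f (fun k => if k ∈ T then a k else 0)

/-- The normalized Fourier transform of the Möbius transform `f_S`, with respect to
a tuple of multiplicative characters indexed by `S`:
`f̂_S(χ_S) = (q-1)^{-|S|} ∑_{b ∈ F_q^{|S|}} f_S(b) ∏_{k ∈ S} χ̄ₖ(bₖ)`. -/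
noncomputable def mobiusFourierCoeff {F : Type*} [Field F] [Fintype F] {r : ℕ}
    (f : (Fin r → F) → ℂ) (S : Finset (Fin r))
    (χ : {k // k ∈ S} → MulChar F ℂ) : ℂ :=
  (1 / ((Fintype.card F : ℂ) - 1) ^ S.card) *
    ∑ b : {k // k ∈ S} → F,
      mobiusTransform f S (fun k => if h : k ∈ S then b ⟨k, h⟩ else 0) *
        ∏ k, (starRingEnd ℂ) (χ k (b k))


section Aux

variable {F : Type*} [Field F] [Fintype F] [DecidableEq F]

set_option linter.unusedSectionVars false

noncomputable instance : Fintype (MulChar F ℂ) := Fintype.ofFinite _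

lemma mulchar_sum_orth (b c : F) :
    ∑ χ : MulChar F ℂ, (starRingEnd ℂ) (χ b) * χ c =
      if b = c ∧ b ≠ 0 then ((Fintype.card F : ℂ) - 1) else 0 := by
  rcases eq_or_ne b 0 with rfl | hb
  · simp [MulChar.map_zero]
  rcases eq_or_ne c 0 with rfl | hc
  · simp [MulChar.map_zero, hb]
  have hconj : ∀ χ : MulChar F ℂ, (starRingEnd ℂ) (χ b) = χ b⁻¹ := by
    intro χ
    have h1 : χ b * χ b⁻¹ = 1 := by
      rw [← map_mul, mul_inv_cancel₀ hb, map_one]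
    have habs : ‖χ b‖ = 1 := by
      refine Complex.norm_eq_one_of_pow_eq_one (n := Fintype.card F - 1) ?_ ?_
      · rw [← map_pow, FiniteField.pow_card_sub_one_eq_one b hb, map_one]
      · have := Fintype.one_lt_card (α := F); omega
    rw [← Complex.inv_eq_conj (by simpa using habs)]
    exact inv_eq_of_mul_eq_one_right h1
  simp only [hconj]
  have hmul : ∀ χ : MulChar F ℂ, χ b⁻¹ * χ c = χ (b⁻¹ * c) := fun χ => (map_mul χ _ _).symm
  simp only [hmul]
  rcases eq_or_ne (b⁻¹ * c) 1 with h1 | h1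
  · have hbc : b = c := by
      field_simp at h1; simp [h1]
    simp only [h1, map_one, Finset.sum_const, Finset.card_univ, nsmul_eq_mul, mul_one]
    rw [if_pos ⟨hbc, hb⟩]
    have hcard : Fintype.card (MulChar F ℂ) = Fintype.card F - 1 := by
      have h := MulChar.card_eq_card_units_of_hasEnoughRootsOfUnity F ℂ
      simp only [Nat.card_eq_fintype_card] at h
      rw [h, Fintype.card_units]
    rw [hcard]
    have h2 : (2:ℕ) ≤ Fintype.card F := Fintype.one_lt_card
    push_cast [Nat.cast_sub (by omega : 1 ≤ Fintype.card F)]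
    ring
  · rw [if_neg (fun h => h1 (by rw [h.1, inv_mul_cancel₀ hc]))]
    obtain ⟨χ₀, hχ₀⟩ := MulChar.exists_apply_ne_one_of_hasEnoughRootsOfUnity (M := F) (R := ℂ)
      (a := b⁻¹ * c) h1
    have key : ∑ χ : MulChar F ℂ, (χ₀ * χ) (b⁻¹ * c) = ∑ χ : MulChar F ℂ, χ (b⁻¹ * c) :=
      Fintype.sum_equiv (Equiv.mulLeft χ₀) _ _ (fun χ => rfl)
    simp only [MulChar.coeToFun_mul, Pi.mul_apply, ← Finset.mul_sum] at key
    rcases mul_eq_mul_right_iff.mp (key.trans (one_mul _).symm) with h | h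
    · exact absurd h hχ₀
    · exact h

lemma mobiusTransform_congr {r : ℕ} (f : (Fin r → F) → ℂ) (S : Finset (Fin r))
    {a₁ a₂ : Fin r → F} (h : ∀ k ∈ S, a₁ k = a₂ k) :
    mobiusTransform f S a₁ = mobiusTransform f S a₂ := by
  unfold mobiusTransform
  refine Finset.sum_congr rfl fun T hT => ?_
  congr 1
  congr 1
  funext k
  by_cases hk : k ∈ T
  · simp [hk, h k (Finset.mem_powerset.mp hT hk)]
  · simp [hk]

lemma mulchar_inner_sum {r : ℕ} (f : (Fin r → F) → ℂ) (S : Finset (Fin r)) (x y : Fin r → F) :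
    (∑ᶠ χ : {k // k ∈ S} → MulChar F ℂ,
      mobiusFourierCoeff f S χ * (∏ k, χ k (x k)) * (∏ k, χ k (y k))) =
    if ∀ k ∈ S, x k * y k ≠ 0 then mobiusTransform f S (fun k => x k * y k) else 0 := by
  classical
  set q := ((Fintype.card F : ℂ)) with hqdef
  have hq : q - 1 ≠ 0 := by
    have h2 : (2:ℕ) ≤ Fintype.card F := Fintype.one_lt_card
    rw [sub_ne_zero, hqdef]
    intro h
    have : Fintype.card F = 1 := by exact_mod_cast h
    omega
  set g : ({k // k ∈ S} → F) → ℂ :=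
    fun b => mobiusTransform f S (fun k => if h : k ∈ S then b ⟨k, h⟩ else 0) with hg
  set zb : {k // k ∈ S} → F := fun k => x k * y k with hzb
  rw [finsum_eq_sum_of_fintype]
  have e1 : ∀ χ : {k // k ∈ S} → MulChar F ℂ,
      mobiusFourierCoeff f S χ * (∏ k, χ k (x k)) * (∏ k, χ k (y k))
      = ∑ b : {k // k ∈ S} → F, (1 / (q - 1) ^ S.card) *
          (g b * ∏ k, (starRingEnd ℂ) (χ k (b k)) * χ k (zb k)) := by
    intro χ
    simp only [hg, hzb]
    rw [mobiusFourierCoeff, ← hqdef, Finset.mul_sum, Finset.sum_mul, Finset.sum_mul]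
    refine Finset.sum_congr rfl fun b _ => ?_
    have hp : (∏ k : {k // k ∈ S}, (starRingEnd ℂ) (χ k (b k))) * (∏ k, χ k (x k))
        * (∏ k, χ k (y k))
        = ∏ k : {k // k ∈ S}, (starRingEnd ℂ) (χ k (b k)) * χ k (x k * y k) := by
      rw [← Finset.prod_mul_distrib, ← Finset.prod_mul_distrib]
      exact Finset.prod_congr rfl fun k _ => by rw [map_mul, mul_assoc]
    rw [← hp]
    ring
  rw [Finset.sum_congr rfl fun χ _ => e1 χ, Finset.sum_comm]
  simp only [← Finset.mul_sum]
  have e2 : ∀ b : {k // k ∈ S} → F,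
      (∑ χ : {k // k ∈ S} → MulChar F ℂ, ∏ k, (starRingEnd ℂ) (χ k (b k)) * χ k (zb k))
      = ∏ k : {k // k ∈ S},
          ∑ χ₀ : MulChar F ℂ, (starRingEnd ℂ) (χ₀ (b k)) * χ₀ (zb k) := by
    intro b
    rw [Finset.prod_univ_sum, Fintype.piFinset_univ]
  have e3 : ∀ b : {k // k ∈ S} → F,
      (∏ k : {k // k ∈ S}, ∑ χ₀ : MulChar F ℂ, (starRingEnd ℂ) (χ₀ (b k)) * χ₀ (zb k))
      = if b = zb ∧ (∀ k : {k // k ∈ S}, zb k ≠ 0) then (q - 1) ^ S.card else 0 := by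
    intro b
    rw [Finset.prod_congr rfl fun k _ => mulchar_sum_orth (b k) (zb k)]
    by_cases h : b = zb ∧ (∀ k : {k // k ∈ S}, zb k ≠ 0)
    · rw [if_pos h]
      obtain ⟨rfl, h2⟩ := h
      rw [Finset.prod_congr rfl fun k _ => if_pos ⟨rfl, h2 k⟩]
      simp [Finset.card_univ, hqdef]
    · rw [if_neg h]
      push_neg at h
      by_cases hb : b = zb
      · obtain ⟨k, hk⟩ := h hb
        exact Finset.prod_eq_zero (Finset.mem_univ k) (by subst hb; simp [hk])
      · obtain ⟨k, hk⟩ := Function.ne_iff.mp hb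
        exact Finset.prod_eq_zero (Finset.mem_univ k) (by simp [hk])
  rw [Finset.sum_congr rfl fun b _ => by rw [e2 b, e3 b]]
  have hiff : (∀ k ∈ S, x k * y k ≠ 0) ↔ (∀ k : {k // k ∈ S}, zb k ≠ 0) := by
    constructor
    · intro h k; exact h k k.2
    · intro h k hk; exact h ⟨k, hk⟩
  by_cases hC : ∀ k : {k // k ∈ S}, zb k ≠ 0
  · rw [if_pos (hiff.mpr hC)]
    rw [Finset.sum_congr rfl fun b _ => by rw [if_congr (and_iff_left hC) rfl rfl]]
    rw [Finset.sum_congr rfl fun b _ => (mul_ite _ _ _ _).trans (by rw [mul_zero])]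
    rw [Finset.sum_ite_eq' Finset.univ zb fun b => g b * (q-1)^S.card]
    rw [if_pos (Finset.mem_univ _)]
    rw [← mul_assoc, mul_comm (1 / (q-1)^S.card) (g zb), mul_assoc,
      one_div, inv_mul_cancel₀ (pow_ne_zero _ hq), mul_one]
    rw [hg]
    exact mobiusTransform_congr f S fun k hk => by simp [hk, hzb]
  · rw [if_neg (fun h => hC (hiff.mp h))]
    rw [Finset.sum_congr rfl fun b _ => by
      rw [if_neg (fun h => hC h.2), mul_zero]]
    simp

lemma mobius_outer {r : ℕ} (f : (Fin r → F) → ℂ) (z : Fin r → F) :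
    (∑ S ∈ (Finset.univ : Finset (Fin r)).powerset,
      if ∀ k ∈ S, z k ≠ 0 then
        mobiusTransform f S z
      else 0) = f z := by
  classical
  unfold mobiusTransform
  set U : Finset (Fin r) := Finset.univ.filter (fun k => z k ≠ 0) with hU
  have hcond : ∀ S : Finset (Fin r), (∀ k ∈ S, z k ≠ 0) ↔ S ⊆ U := by
    intro S
    constructor
    · intro h k hk; simp [hU, h k hk]
    · intro h k hk; exact (Finset.mem_filter.mp (h hk)).2
  rw [Finset.sum_congr rfl fun S _ => by rw [if_congr (hcond S) rfl rfl]]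
  rw [Finset.sum_ite, Finset.sum_const_zero, add_zero]
  have hfil : (Finset.univ : Finset (Fin r)).powerset.filter (· ⊆ U) = U.powerset := by
    ext T; simp [Finset.mem_powerset, Finset.subset_univ]
  rw [hfil]
  -- swap sums
  rw [Finset.sum_comm' (s := U.powerset) (t := fun S => S.powerset) (t' := U.powerset)
    (s' := fun T => U.powerset.filter (fun S => T ⊆ S)) (by
      intro S T
      simp only [Finset.mem_powerset, Finset.mem_filter]
      constructor
      · rintro ⟨h1, h2⟩; exact ⟨⟨h1, h2⟩, h2.trans h1⟩
      · rintro ⟨⟨h1, h2⟩, -⟩; exact ⟨h1, h2⟩)]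
  have inner : ∀ T ∈ U.powerset,
      (∑ S ∈ U.powerset.filter (fun S => T ⊆ S),
        (-1 : ℂ) ^ (S \ T).card * f (fun k => if k ∈ T then z k else 0))
      = (if T = U then 1 else 0) * f (fun k => if k ∈ T then z k else 0) := by
    intro T hT
    rw [← Finset.sum_mul]
    congr 1
    have hTU : T ⊆ U := Finset.mem_powerset.mp hT
    have hbij : (∑ S ∈ U.powerset.filter (fun S => T ⊆ S), (-1 : ℂ) ^ (S \ T).card)
        = ∑ W ∈ (U \ T).powerset, (-1 : ℂ) ^ W.card := by
      refine Finset.sum_nbij' (fun S => S \ T) (fun W => W ∪ T) ?_ ?_ ?_ ?_ (fun S hS => rfl)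
      · intro S hS
        simp only [Finset.mem_powerset, Finset.mem_filter] at hS ⊢
        exact Finset.sdiff_subset_sdiff hS.1 le_rfl
      · intro W hW
        simp only [Finset.mem_powerset, Finset.mem_filter] at hW ⊢
        exact ⟨Finset.union_subset (hW.trans Finset.sdiff_subset) hTU,
          Finset.subset_union_right⟩
      · intro S hS
        simp only [Finset.mem_filter] at hS
        exact Finset.sdiff_union_of_subset hS.2
      · intro W hW
        simp only [Finset.mem_powerset] at hW
        exact Finset.union_sdiff_cancel_right
          (Finset.disjoint_of_subset_left hW Finset.sdiff_disjoint)
    rw [hbij]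
    have hint := Finset.sum_powerset_neg_one_pow_card (x := U \ T)
    have hcast : ((∑ m ∈ (U \ T).powerset, (-1 : ℤ) ^ m.card : ℤ) : ℂ)
        = ∑ m ∈ (U \ T).powerset, (-1 : ℂ) ^ m.card := by push_cast; rfl
    rw [← hcast, hint]
    by_cases h : T = U
    · rw [if_pos (by simp [h]), if_pos h, Int.cast_one]
    · rw [if_neg (by
        intro he
        exact h (Finset.Subset.antisymm hTU (by
          intro k hk
          by_contra hkT
          exact (Finset.eq_empty_iff_forall_notMem.mp he k) (Finset.mem_sdiff.mpr ⟨hk, hkT⟩)))),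
        if_neg h, Int.cast_zero]
  rw [Finset.sum_congr rfl inner]
  rw [Finset.sum_congr rfl fun T _ => (ite_mul _ _ _ _).trans (by rw [one_mul, zero_mul])]
  rw [Finset.sum_ite_eq' U.powerset U (fun T => f (fun k => if k ∈ T then z k else 0))]
  rw [if_pos (Finset.mem_powerset.mpr le_rfl)]
  congr 1
  funext k
  by_cases hk : k ∈ U
  · simp [hk]
  · simp only [hU, Finset.mem_filter, Finset.mem_univ, true_and, not_not] at hk
    simp [hk]

end Aux

theorem indicator_dot_eq_mobius_fourier_expansion
    {F : Type*} [Field F] [Fintype F] [DecidableEq F] {r : ℕ} (hr : 0 < r)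
    (a : F) (x y : Fin r → F) :
    (if ∑ k, x k * y k = a then (1 : ℂ) else 0) =
      ∑ S ∈ (Finset.univ : Finset (Fin r)).powerset,
        ∑ᶠ χ : {k // k ∈ S} → MulChar F ℂ,
          mobiusFourierCoeff (fun t : Fin r → F => if ∑ k, t k = a then (1 : ℂ) else 0) S χ *
            (∏ k, χ k (x k)) * (∏ k, χ k (y k)) := by
  classical
  rw [Finset.sum_congr rfl fun S _ =>
    mulchar_inner_sum (fun t : Fin r → F => if ∑ k, t k = a then (1:ℂ) else 0) S x y]
  exact (mobius_outer (fun t : Fin r → F => if ∑ k, t k = a then (1:ℂ) else 0)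
    (fun k => x k * y k)).symm
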